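/- Let k be a field, d ≥ 2, and f = x^{d+1} + y^d z ∈ k[x,y,z]. The 4×3 matrix η with rows (y^{d−1},0,0), (0,1,0), (0,0,1), ((d+1)x^d, y, dz) satisfies: the maximal minors of η fixing the last row are, up to sign, the partial derivatives f_x = (d+1)x^d, f_y = d y^{d−1} z, f_z = y^d of f; moreover ht I_3(η) = 2 and ht I_1((d+1)x^d, y, dz) = 3 (assuming char k does not divide d(d+1)). -/

import Mathlib

open MvPolynomial

noncomputable def idealHeight {R : Type*} [CommRing R] (I : Ideal R) : ℕ∞ :=
  ⨅ (P : PrimeSpectrum R) (_ : I ≤ P.asIdeal), Order.height P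

def minorsIdeal {R : Type*} [CommRing R] {a b : ℕ} (M : Matrix (Fin a) (Fin b) R)
    (t : ℕ) : Ideal R :=
  Ideal.span { d | ∃ (r : Fin t → Fin a) (c : Fin t → Fin b), d = (M.submatrix r c).det }

/-!
Both ideals have a least prime over them, a coordinate prime: `I₃(η)` contains `y^{d-1}` and
a unit multiple of `x^d`, and lies in `(x, y)` because every entry of the first column of `η`
does; the last-row ideal contains `y` and unit multiples of `x^d` and `z`, and lies in
`(x, y, z)`. A coordinate prime `(X i : i ∈ s)` has height `#s`: the chain obtained by adding
the variables one at a time bounds it from below, Krull's height theorem from above.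
-/

namespace MvPolynomial

variable {σ R : Type*} [CommRing R]

theorem span_X_image_eq_ker_aeval (s : Set σ) [DecidablePred (· ∈ s)] :
    (Ideal.span (X '' s) : Ideal (MvPolynomial σ R)) =
      RingHom.ker (aeval fun i ↦ if i ∈ s then 0 else (X i : MvPolynomial σ R)) := by
  set φ : MvPolynomial σ R →ₐ[R] MvPolynomial σ R := aeval fun i ↦ if i ∈ s then 0 else X i
  set J : Ideal (MvPolynomial σ R) := Ideal.span (X '' s)
  refine le_antisymm (Ideal.span_le.2 ?_) fun p hp ↦ ?_
  · rintro _ ⟨i, hi, rfl⟩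
    simp [φ, hi]
  · have hmk : (Ideal.Quotient.mkₐ R J).comp φ = Ideal.Quotient.mkₐ R J := by
      ext i
      by_cases hi : i ∈ s
      · have hXi : X i ∈ J := Ideal.subset_span (Set.mem_image_of_mem X hi)
        simp [φ, hi, Ideal.Quotient.eq_zero_iff_mem.2 hXi]
      · simp [φ, hi]
    rw [← Ideal.Quotient.eq_zero_iff_mem, ← Ideal.Quotient.mkₐ_eq_mk R, ← hmk]
    simp [RingHom.mem_ker.1 hp]

instance isPrime_span_X_image [IsDomain R] (s : Set σ) :
    (Ideal.span (X '' s) : Ideal (MvPolynomial σ R)).IsPrime := by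
  classical
  rw [span_X_image_eq_ker_aeval]
  exact RingHom.ker_isPrime _

theorem X_mem_span_X_image_iff [Nontrivial R] {s : Set σ} {j : σ} :
    (X j : MvPolynomial σ R) ∈ Ideal.span (X '' s) ↔ j ∈ s := by
  classical
  rw [mem_ideal_span_X_image]
  simp [support_X, Finsupp.single_apply]

theorem height_span_X_image [IsDomain R] [IsNoetherianRing R] [Finite σ] (s : Finset σ) :
    (Ideal.span (X '' s) : Ideal (MvPolynomial σ R)).height = s.card := by
  classical
  refine le_antisymm ?_ ?_
  · have hmin := Ideal.height_le_card_of_mem_minimalPrimes_span_finset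
      (s := s.image (X : σ → MvPolynomial σ R)) (p := Ideal.span (X '' s))
      (by rw [Finset.coe_image, Ideal.minimalPrimes_eq_subsingleton_self]; exact rfl)
    exact hmin.trans (by exact_mod_cast Finset.card_image_le)
  · induction s using Finset.induction_on with
    | empty => simp
    | insert a t ha ih =>
      have hlt : (Ideal.span (X '' t) : Ideal (MvPolynomial σ R)) <
          Ideal.span (X '' ↑(insert a t)) :=
        SetLike.lt_iff_le_and_exists.2 ⟨Ideal.span_mono (Set.image_mono (by simp)),
          X a, X_mem_span_X_image_iff.2 (by simp), by simpa [X_mem_span_X_image_iff] using ha⟩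
      rw [Finset.card_insert_of_notMem ha, Nat.cast_add, Nat.cast_one]
      calc (t.card : ℕ∞) + 1 ≤ (Ideal.span (X '' t) : Ideal (MvPolynomial σ R)).height + 1 := by
            gcongr
        _ ≤ _ := Ideal.height_add_one_le_of_lt_of_isPrime hlt

end MvPolynomial

theorem Matrix.det_mem_of_forall_mem_col {R n : Type*} [CommRing R] [Fintype n] [DecidableEq n]
    {I : Ideal R} (A : Matrix n n R) (j : n) (h : ∀ i, A i j ∈ I) : A.det ∈ I := by
  rw [← Ideal.Quotient.eq_zero_iff_mem, RingHom.map_det]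
  exact Matrix.det_eq_zero_of_column_eq_zero j fun i ↦ Ideal.Quotient.eq_zero_iff_mem.2 (h i)

theorem minorsIdeal_le_of_forall_mem_col {R : Type*} [CommRing R] {I : Ideal R} {a b : ℕ}
    (M : Matrix (Fin a) (Fin b) R) (j : Fin b) (h : ∀ i, M i j ∈ I) : minorsIdeal M b ≤ I := by
  rw [minorsIdeal, Ideal.span_le]
  rintro _ ⟨r, c, rfl⟩
  by_cases hc : c.Injective
  · obtain ⟨j', rfl⟩ := (Finite.injective_iff_surjective.1 hc) j
    exact Matrix.det_mem_of_forall_mem_col _ j' fun i ↦ h (r i)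
  · obtain ⟨j₁, j₂, hc, hne⟩ := Function.not_injective_iff.1 hc
    rw [Matrix.det_zero_of_column_eq hne fun i ↦ by simp [hc]]
    exact I.zero_mem

theorem idealHeight_eq_height_of_forall_isPrime_le {R : Type*} [CommRing R] {I P : Ideal R}
    [P.IsPrime] (hIP : I ≤ P) (hP : ∀ Q : Ideal R, Q.IsPrime → I ≤ Q → P ≤ Q) :
    idealHeight I = P.height := by
  refine le_antisymm ?_ (le_iInf₂ fun Q hQ ↦ ?_)
  · exact (iInf₂_le (⟨P, ‹_›⟩ : PrimeSpectrum R) hIP).trans_eq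
      (PrimeSpectrum.height_eq_orderHeight _).symm
  · rw [← PrimeSpectrum.height_eq_orderHeight]
    exact Ideal.height_mono (hP _ Q.isPrime hQ)

theorem Ideal.IsPrime.mem_of_isUnit_mul_pow_mem {R : Type*} [CommRing R] {Q : Ideal R}
    (hQ : Q.IsPrime) {u x : R} (hu : IsUnit u) {n : ℕ} (h : u * x ^ n ∈ Q) : x ∈ Q :=
  hQ.mem_of_pow_mem n ((Ideal.unit_mul_mem_iff_mem Q hu).1 h)

section Cuspidal

variable {k : Type*} [Field k] (d : ℕ)

noncomputable def cuspidalMatrix : Matrix (Fin 4) (Fin 3) (MvPolynomial (Fin 3) k) :=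
  Matrix.of ![![X 1 ^ (d - 1), 0, 0], ![0, 1, 0], ![0, 0, 1],
    ![((d : MvPolynomial (Fin 3) k) + 1) * X 0 ^ d, X 1, (d : MvPolynomial (Fin 3) k) * X 2]]

noncomputable def cuspidalRowIdeal : Ideal (MvPolynomial (Fin 3) k) :=
  Ideal.span {((d : MvPolynomial (Fin 3) k) + 1) * X 0 ^ d, X 1,
    (d : MvPolynomial (Fin 3) k) * X 2}

theorem minorsIdeal_cuspidalMatrix_le_span_X (hd : 2 ≤ d) :
    minorsIdeal (cuspidalMatrix (k := k) d) 3 ≤ Ideal.span (X '' ↑({0, 1} : Finset (Fin 3))) := by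
  have hX (i : Fin 3) (hi : i ∈ ({0, 1} : Finset (Fin 3))) :
      (X i : MvPolynomial (Fin 3) k) ∈ Ideal.span (X '' ↑({0, 1} : Finset (Fin 3))) :=
    Ideal.subset_span (Set.mem_image_of_mem X hi)
  refine minorsIdeal_le_of_forall_mem_col _ 0 fun i ↦ ?_
  fin_cases i
  · exact Ideal.pow_mem_of_mem _ (hX 1 (by simp)) _ (by omega)
  · exact Ideal.zero_mem _
  · exact Ideal.zero_mem _
  · exact Ideal.mul_mem_left _ _ (Ideal.pow_mem_of_mem _ (hX 0 (by simp)) _ (by omega))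

theorem span_X_le_of_minorsIdeal_cuspidalMatrix_le (hd : (d : k) + 1 ≠ 0)
    {Q : Ideal (MvPolynomial (Fin 3) k)} (hQ : Q.IsPrime)
    (h : minorsIdeal (cuspidalMatrix (k := k) d) 3 ≤ Q) :
    Ideal.span (X '' ↑({0, 1} : Finset (Fin 3))) ≤ Q := by
  have hy : X 1 ^ (d - 1) ∈ Q := h (Ideal.subset_span ⟨![0, 1, 2], id, by
    rw [Matrix.det_fin_three]; simp [cuspidalMatrix]⟩)
  have hx : C ((d : k) + 1) * X 0 ^ d ∈ Q := h (Ideal.subset_span ⟨![1, 2, 3], id, by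
    rw [Matrix.det_fin_three]; simp [cuspidalMatrix]⟩)
  rw [Ideal.span_le, Set.image_subset_iff]
  intro i hi
  simp only [Finset.coe_insert, Finset.coe_singleton, Set.mem_insert_iff,
    Set.mem_singleton_iff] at hi
  rcases hi with rfl | rfl
  exacts [hQ.mem_of_isUnit_mul_pow_mem ((isUnit_iff_ne_zero.2 hd).map C) hx,
    hQ.mem_of_pow_mem _ hy]

theorem cuspidalRowIdeal_le_span_X (hd : 1 ≤ d) :
    cuspidalRowIdeal (k := k) d ≤ Ideal.span (X '' ↑({0, 1, 2} : Finset (Fin 3))) := by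
  have hX (i : Fin 3) :
      (X i : MvPolynomial (Fin 3) k) ∈ Ideal.span (X '' ↑({0, 1, 2} : Finset (Fin 3))) :=
    Ideal.subset_span ⟨i, by fin_cases i <;> simp, rfl⟩
  rw [cuspidalRowIdeal, Ideal.span_le]
  rintro _ (rfl | rfl | rfl)
  · exact Ideal.mul_mem_left _ _ (Ideal.pow_mem_of_mem _ (hX 0) _ hd)
  · exact hX 1
  · exact Ideal.mul_mem_left _ _ (hX 2)

theorem span_X_le_of_cuspidalRowIdeal_le (hd₁ : (d : k) ≠ 0) (hd₂ : (d : k) + 1 ≠ 0)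
    {Q : Ideal (MvPolynomial (Fin 3) k)} (hQ : Q.IsPrime) (h : cuspidalRowIdeal d ≤ Q) :
    Ideal.span (X '' ↑({0, 1, 2} : Finset (Fin 3))) ≤ Q := by
  rw [cuspidalRowIdeal, Ideal.span_le, Set.insert_subset_iff, Set.insert_subset_iff,
    Set.singleton_subset_iff] at h
  have hx : C ((d : k) + 1) * X 0 ^ d ∈ Q := by simpa using h.1
  have hz : C (d : k) * X 2 ^ 1 ∈ Q := by simpa using h.2.2
  rw [Ideal.span_le, Set.image_subset_iff]
  intro i hi
  simp only [Finset.coe_insert, Finset.coe_singleton, Set.mem_insert_iff,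
    Set.mem_singleton_iff] at hi
  rcases hi with rfl | rfl | rfl
  exacts [hQ.mem_of_isUnit_mul_pow_mem ((isUnit_iff_ne_zero.2 hd₂).map C) hx, h.2.1,
    hQ.mem_of_isUnit_mul_pow_mem ((isUnit_iff_ne_zero.2 hd₁).map C) hz]

end Cuspidal

/-- **Higher cuspidal plane curves.**  Let `k` be a field with `char k ∤ d(d+1)`, `d ≥ 2`,
and `f = x^{d+1} + y^d z ∈ k[x,y,z]`.  The `4 × 3` matrix `η` with rows
`(y^{d−1},0,0), (0,1,0), (0,0,1), ((d+1)x^d, y, dz)` satisfies: the signed maximal minors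
of `η` fixing the last row are, up to sign/order, the partial derivatives
`f_x = (d+1)x^d`, `f_z = y^d`, `f_y = d y^{d−1} z`; moreover `ht I₃(η) = 2` and the ideal
generated by the entries of the last row, `⟨(d+1)x^d, y, dz⟩`, has height `3`.
(`x = X 0`, `y = X 1`, `z = X 2`.) -/
theorem higher_cuspidal {k : Type*} [Field k] (d : ℕ) (hd : 2 ≤ d)
    (hchar₁ : (d : k) ≠ 0) (hchar₂ : (d : k) + 1 ≠ 0)
    (f : MvPolynomial (Fin 3) k) (hf : f = X 0 ^ (d + 1) + X 1 ^ d * X 2)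
    (η : Matrix (Fin 4) (Fin 3) (MvPolynomial (Fin 3) k))
    (hη : η = Matrix.of
      ![![X 1 ^ (d - 1), 0, 0], ![0, 1, 0], ![0, 0, 1],
        ![((d : MvPolynomial (Fin 3) k) + 1) * X 0 ^ d, X 1,
          (d : MvPolynomial (Fin 3) k) * X 2]]) :
    (-1 : MvPolynomial (Fin 3) k) ^ ((0 : Fin 3) : ℕ) *
        (η.submatrix (Fin.castSucc (0 : Fin 3)).succAbove id).det = pderiv (0 : Fin 3) f ∧
    (-1 : MvPolynomial (Fin 3) k) ^ ((1 : Fin 3) : ℕ) *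
        (η.submatrix (Fin.castSucc (1 : Fin 3)).succAbove id).det = pderiv (2 : Fin 3) f ∧
    (-1 : MvPolynomial (Fin 3) k) ^ ((2 : Fin 3) : ℕ) *
        (η.submatrix (Fin.castSucc (2 : Fin 3)).succAbove id).det = pderiv (1 : Fin 3) f ∧
    idealHeight (minorsIdeal η 3) = 2 ∧
    idealHeight (Ideal.span
      {((d : MvPolynomial (Fin 3) k) + 1) * X 0 ^ d, X 1,
        (d : MvPolynomial (Fin 3) k) * X 2}) = 3 := by
  subst hf hη
  refine ⟨?_, ?_, ?_, ?_, ?_⟩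
  · simp [Matrix.det_fin_three]
  · obtain ⟨e, rfl⟩ : ∃ e, d = e + 1 := ⟨d - 1, by omega⟩
    simp [Matrix.det_fin_three, Fin.succAbove, Fin.lt_def, pow_succ]
  · simp [Matrix.det_fin_three, Fin.succAbove, Fin.lt_def, mul_comm, mul_assoc, mul_left_comm]
  · refine (idealHeight_eq_height_of_forall_isPrime_le (minorsIdeal_cuspidalMatrix_le_span_X d hd)
      fun Q hQ ↦ span_X_le_of_minorsIdeal_cuspidalMatrix_le d hchar₂ hQ).trans ?_
    rw [height_span_X_image]
    rfl
  · refine (idealHeight_eq_height_of_forall_isPrime_le (cuspidalRowIdeal_le_span_X d (by omega))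
      fun Q hQ ↦ span_X_le_of_cuspidalRowIdeal_le d hchar₁ hchar₂ hQ).trans ?_
    rw [height_span_X_image]
    rfl
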